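/- There exists an effectively computable positive real number c₁₀ such that the following holds. Let y be a non-decreasing function from the positive real numbers to the real numbers with y(x) ≥ 3 for all x > 0, let X ≥ 9 be a real number with y(√X) > (log X)^{1/4}, and let n be an integer with √X < n ≤ X. Then (log n)^{π(y(√n))−1} < exp(c₁₀·y(n)). -/

import Mathlib

/-!
Chebyshev's bound `π(t) log t ≤ 5t` turns the claim into `(π(y(√n)) - 1) · log log n ≤ 20 y(n)`.
The hypothesis on `X` gives `log log n ≤ log log X < 4 log y(√X) ≤ 4 log y(n)`, and
`π(y(√n)) ≤ π(y(n))` by monotonicity, so the left side is at most `4 π(y(n)) log y(n) ≤ 20 y(n)`.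
-/

open Real

/-- Prime counting function `π` for a real argument: the number of primes `p ≤ x`. -/
noncomputable def primePi (x : ℝ) : ℕ := Nat.primeCounting ⌊x⌋₊

lemma primePi_mono : Monotone primePi :=
  Nat.monotone_primeCounting.comp Nat.floor_mono

lemma primePi_mul_log_le {t : ℝ} (ht : 0 ≤ t) : (primePi t : ℝ) * log t ≤ 5 * t := by
  rcases le_or_gt t 1 with ht1 | ht1
  · have : primePi t = 0 := Nat.primeCounting_eq_zero_iff.2 (Nat.floor_le_one_of_le_one ht1)
    simp [this, ht]
  have hlog : 0 < log √t := log_pos ((lt_sqrt zero_le_one).2 (by simpa using ht1))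
  have hsqrt : √t * log √t ≤ t := calc
    √t * log √t ≤ √t * √t := by
      gcongr
      linarith [log_le_sub_one_of_pos (sqrt_pos.2 (by linarith) : 0 < √t)]
    _ = t := mul_self_sqrt ht
  have hlog4 : log 4 < 3 / 2 := by
    rw [show (4 : ℝ) = 2 ^ 2 by norm_num, log_pow]
    linarith [log_two_lt_d9]
  have hπ : (primePi t : ℝ) * log √t ≤ log 4 * t + √t * log √t := by
    have := Chebyshev.pi_le_log4_mul_div ht1
    rw [← le_div_iff₀ hlog, add_div, mul_div_cancel_right₀ _ hlog.ne']
    exact this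
  rw [show log t = 2 * log √t by rw [log_sqrt ht]; ring]
  nlinarith

theorem stmt14 :
    ∃ c₁₀ : ℝ, 0 < c₁₀ ∧
      ∀ y : ℝ → ℝ,
        (∀ a b : ℝ, 0 < a → a ≤ b → y a ≤ y b) →
        (∀ x : ℝ, 0 < x → 3 ≤ y x) →
        ∀ X : ℝ, 9 ≤ X → Real.log X ^ ((1 : ℝ) / 4) < y (Real.sqrt X) →
          ∀ n : ℕ, Real.sqrt X < (n : ℝ) → (n : ℝ) ≤ X →
            Real.log n ^ (primePi (y (Real.sqrt n)) - 1) < Real.exp (c₁₀ * y n) := by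
  refine ⟨21, by norm_num, fun y hmono hy3 X hX hXy n hXn hnX => ?_⟩
  have hsqrtX : 1 < √X := (lt_sqrt zero_le_one).2 (by linarith)
  have hn : 1 < (n : ℝ) := hsqrtX.trans hXn
  have hlogn : 0 < log n := log_pos hn
  have hyn : 3 ≤ y n := hy3 n (by linarith)
  have hloglog : log (log n) < 4 * log (y n) := calc
    log (log n) ≤ log (log X) := log_le_log hlogn (log_le_log (by linarith) hnX)
    _ < 4 * log (y √X) := by
      have hlogX : 0 < log X := log_pos (by linarith)
      have := log_lt_log (rpow_pos_of_pos hlogX _) hXy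
      rw [log_rpow hlogX] at this
      linarith
    _ ≤ 4 * log (y n) := by
      gcongr
      · linarith [hy3 √X (by linarith)]
      · exact hmono _ _ (by linarith) hXn.le
  have hπ : primePi (y √n) - 1 ≤ primePi (y n) :=
    (Nat.sub_le _ _).trans <| primePi_mono <|
      hmono _ _ (sqrt_pos.2 (by linarith)) (sqrt_le_self_iff.2 (Or.inr hn.le))
  rw [← exp_log (pow_pos hlogn _), log_pow, exp_lt_exp]
  calc ((primePi (y √n) - 1 : ℕ) : ℝ) * log (log n)
      ≤ ((primePi (y √n) - 1 : ℕ) : ℝ) * (4 * log (y n)) := by gcongr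
    _ ≤ primePi (y n) * (4 * log (y n)) := by
      gcongr
      exact mul_nonneg zero_le_four (log_nonneg (by linarith))
    _ < 21 * y n := by linarith [primePi_mul_log_le (show 0 ≤ y n by linarith)]
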